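/- Let t ≥ 2 be an even integer and let p_1, …, p_t, q be distinct primes with p_i ≡ 5 (mod 8) for all i and q ≡ 3 (mod 8), and suppose the Legendre symbol (q/p_i) = 1 for all i; set P = p_1⋯p_t and let P = P_v · P_v′ be a factorization of P into coprime positive divisors. If there exist nonzero integers x, y, z, w with gcd(x, y) = 1 satisfying x² + qy² = P_v′ z² and x² − qy² = P_v w², then the Legendre symbol (y/P) = 1 and the quartic residue symbols satisfy (q/P)_4 = (−1/P_v)_4 · (x/P), where (x/P) denotes the Jacobi symbol and (−1/P_v)_4 = ∏_{p_i ∣ P_v} (−1)^{(p_i−1)/4}. -/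

import Mathlib

/-!
Since `P ≡ 1 (mod 8)`, reciprocity gives `(y/P) = (P/|y|)`. Modulo `y` the two equations say
`P_v w² ≡ P_v' z²`, so `(P_v/|y|) = (P_v'/|y|)` and `(P/|y|) = (P_v/|y|)² = 1`.

For `p ∣ P_v` we have `x² ≡ q y² (mod p)`, hence `q^((p-1)/4) ≡ (xy)^((p-1)/2) ≡ (xy/p)`; for
`p ∣ P_v'` instead `x² ≡ -q y²`, and since `(p-1)/4` is odd this flips the sign. Over all `p_i`
the signs multiply to `(-1)^#{p_i ∣ P_v'}`, which equals `(-1)^#{p_i ∣ P_v}` because `t` is even,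
and `(xy/P) = (x/P)` by the first part.
-/

open Finset

/-- The quartic residue symbol `(a / p)₄ ∈ {±1}` for a prime `p ≡ 1 (mod 4)` and `a`
with `(a / p) = 1`: it is the sign determined by `(a / p)₄ ≡ a^((p-1)/4) (mod p)`. -/
noncomputable def quarticSym (a : ℤ) (p : ℕ) : ℤ :=
  if (a : ZMod p) ^ ((p - 1) / 4) = -1 then -1 else 1

theorem IsCoprime.sq_add_mul_sq {R : Type*} [CommRing R] {x y : R} (h : IsCoprime x y) (c : R) :
    IsCoprime (x ^ 2 + c * y ^ 2) y := by
  rw [sq y, ← mul_assoc, IsCoprime.add_mul_right_left_iff]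
  exact h.pow_left

theorem IsCoprime.sq_sub_mul_sq {R : Type*} [CommRing R] {x y : R} (h : IsCoprime x y) (c : R) :
    IsCoprime (x ^ 2 - c * y ^ 2) y := by
  simpa [sub_eq_add_neg] using h.sq_add_mul_sq (-c)

theorem prod_mod_eight_eq_one {ι : Type*} {s : Finset ι} (hs : Even #s) {p : ι → ℕ}
    (hp : ∀ i ∈ s, p i % 8 = 5) : (∏ i ∈ s, p i) % 8 = 1 := by
  obtain ⟨k, hk⟩ := hs
  rw [prod_nat_mod, prod_congr rfl hp, prod_const, hk, ← two_mul, pow_mul, Nat.pow_mod]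
  norm_num

theorem prod_eq_neg_one_pow_card_mul_prod {ι R : Type*} [Fintype ι] [DecidableEq ι] [CommRing R]
    (hι : Even (Fintype.card ι)) (S : Finset ι) {f g : ι → R} (hS : ∀ i ∈ S, f i = g i)
    (hSc : ∀ i ∈ Sᶜ, f i = -g i) : ∏ i, f i = (-1) ^ #S * ∏ i, g i := by
  have hsign : (-1 : R) ^ #Sᶜ = (-1) ^ #S := by
    rw [← card_compl_add_card S] at hι
    exact neg_one_pow_congr (Nat.even_add.mp hι)
  rw [← prod_mul_prod_compl S, prod_congr rfl hS, prod_congr rfl hSc, prod_neg, hsign,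
    ← prod_mul_prod_compl S g]
  ring

theorem jacobiSym_prod_right {ι : Type*} (a : ℤ) (s : Finset ι) {f : ι → ℕ}
    (hf : ∀ i ∈ s, f i ≠ 0) : jacobiSym a (∏ i ∈ s, f i) = ∏ i ∈ s, jacobiSym a (f i) := by
  classical
  induction s using Finset.induction_on with
  | empty => simp [jacobiSym.one_right]
  | insert i s hi ih =>
    rw [prod_insert hi, prod_insert hi, jacobiSym.mul_right' a (hf i (mem_insert_self i s))
      (prod_ne_zero_iff.mpr fun j hj => hf j (mem_insert_of_mem hj)),
      ih fun j hj => hf j (mem_insert_of_mem hj)]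

theorem jacobiSym_natCast_comm_of_mod_eight_eq_one {n b : ℕ} (hb : b % 8 = 1) (hn : n ≠ 0) :
    jacobiSym n b = jacobiSym b n := by
  have hb_odd : Odd b := Nat.odd_iff.mpr (by omega)
  induction n using induction_on_primes with
  | zero => exact absurd rfl hn
  | one => rw [Nat.cast_one, jacobiSym.one_left, jacobiSym.one_right]
  | prime_mul r n hr ih =>
    have hn0 : n ≠ 0 := right_ne_zero_of_mul hn
    have hr_comm : jacobiSym r b = jacobiSym b r := by
      rcases hr.eq_two_or_odd' with rfl | hr_odd
      · rw [Nat.cast_ofNat, jacobiSym.at_two hb_odd, ZMod.χ₈_nat_eq_if_mod_eight, if_neg (by omega),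
          if_pos (by omega), jacobiSym.mod_left, show (b : ℤ) % ((2 : ℕ) : ℤ) = 1 by omega,
          jacobiSym.one_left]
      · exact jacobiSym.quadratic_reciprocity_one_mod_four' hr_odd (by omega)
    rw [Nat.cast_mul, jacobiSym.mul_left, jacobiSym.mul_right' _ hr.ne_zero hn0, hr_comm, ih hn0]

theorem jacobiSym_comm_natAbs_of_mod_eight_eq_one {a : ℤ} {b : ℕ} (hb : b % 8 = 1)
    (ha : a ≠ 0) : jacobiSym a b = jacobiSym b a.natAbs := by
  rw [← jacobiSym_natCast_comm_of_mod_eight_eq_one hb (Int.natAbs_ne_zero.mpr ha)]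
  rcases Int.natAbs_eq a with h | h
  · rw [← h]
  · rw [h, jacobiSym.neg _ (Nat.odd_iff.mpr (by omega)), ZMod.χ₄_nat_one_mod_four (by omega),
      one_mul, Int.natAbs_neg, Int.natAbs_natCast]

theorem jacobiSym_eq_of_mul_sq_modEq {a b u v : ℤ} {n : ℕ} (h : a * u ^ 2 ≡ b * v ^ 2 [ZMOD n])
    (hu : u.gcd n = 1) (hv : v.gcd n = 1) : jacobiSym a n = jacobiSym b n := by
  have := jacobiSym.mod_left' (b := n) h
  rwa [jacobiSym.mul_left, jacobiSym.mul_left, jacobiSym.sq_one' hu, jacobiSym.sq_one' hv,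
    mul_one, mul_one] at this

theorem jacobiSym_eq_one_of_sq_add_mul_sq_of_sq_sub_mul_sq {x y c z w : ℤ} {A B : ℕ}
    (hAB : A * B % 8 = 1) (hy : y ≠ 0) (hxy : IsCoprime x y)
    (hB : x ^ 2 + c * y ^ 2 = B * z ^ 2) (hA : x ^ 2 - c * y ^ 2 = A * w ^ 2) :
    jacobiSym y (A * B) = 1 := by
  have hcopB : IsCoprime ((B : ℤ) * z ^ 2) y := hB ▸ hxy.sq_add_mul_sq c
  have hcopA : IsCoprime ((A : ℤ) * w ^ 2) y := hA ▸ hxy.sq_sub_mul_sq c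
  have hgcd {u : ℤ} (hu : IsCoprime u y) : u.gcd y.natAbs = 1 :=
    show u.gcd y = 1 from Int.isCoprime_iff_gcd_eq_one.mp hu
  have hmod : (A : ℤ) * w ^ 2 ≡ B * z ^ 2 [ZMOD y.natAbs] :=
    Int.modEq_iff_dvd.mpr (Int.natAbs_dvd_self.trans ⟨2 * c * y, by linear_combination hA - hB⟩)
  have hw : IsCoprime w y := (IsCoprime.pow_left_iff two_pos).mp hcopA.of_mul_left_right
  have hz : IsCoprime z y := (IsCoprime.pow_left_iff two_pos).mp hcopB.of_mul_left_right
  rw [jacobiSym_comm_natAbs_of_mod_eight_eq_one hAB hy, Nat.cast_mul, jacobiSym.mul_left,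
    ← jacobiSym_eq_of_mul_sq_modEq hmod (hgcd hw) (hgcd hz), ← sq,
    jacobiSym.sq_one (hgcd hcopA.of_mul_left_left)]

theorem quarticSym_eq_of_pow_div_four_eq {p : ℕ} (hp : 2 < p) {a e : ℤ} (he : e = 1 ∨ e = -1)
    (h : (a : ZMod p) ^ ((p - 1) / 4) = e) : quarticSym a p = e := by
  have : Fact (2 < p) := ⟨hp⟩
  rcases he with rfl | rfl
  · rw [quarticSym, if_neg (by rw [h, Int.cast_one]; exact ZMod.neg_one_ne_one.symm)]
  · rw [quarticSym, if_pos (by rw [h, Int.cast_neg, Int.cast_one])]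

section ModPrime

variable {p : ℕ} [Fact p.Prime] {a x y : ℤ}

theorem intCast_ne_zero_of_dvd_sq_sub_mul_sq (hxy : IsCoprime x y)
    (h : (p : ℤ) ∣ x ^ 2 - a * y ^ 2) : (y : ZMod p) ≠ 0 := by
  rw [Ne, ZMod.intCast_zmod_eq_zero_iff_dvd,
    ← (Nat.prime_iff_prime_int.mp Fact.out).coprime_iff_not_dvd]
  exact (hxy.sq_sub_mul_sq a).of_isCoprime_of_dvd_left h

theorem sq_eq_mul_sq_of_dvd (h : (p : ℤ) ∣ x ^ 2 - a * y ^ 2) :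
    (x : ZMod p) ^ 2 = a * y ^ 2 := by
  rw [← sub_eq_zero]
  exact_mod_cast (ZMod.intCast_zmod_eq_zero_iff_dvd _ p).mpr h

theorem jacobiSym_mul_eq_one_or_neg_one_of_dvd (hxy : IsCoprime x y) (ha : (a : ZMod p) ≠ 0)
    (h : (p : ℤ) ∣ x ^ 2 - a * y ^ 2) :
    jacobiSym (x * y) p = 1 ∨ jacobiSym (x * y) p = -1 := by
  have hy := intCast_ne_zero_of_dvd_sq_sub_mul_sq hxy h
  have hx : (x : ZMod p) ≠ 0 := by
    intro hx
    have hsq := sq_eq_mul_sq_of_dvd h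
    rw [hx, zero_pow two_ne_zero] at hsq
    exact mul_ne_zero ha (pow_ne_zero 2 hy) hsq.symm
  rw [← jacobiSym.legendreSym.to_jacobiSym]
  exact legendreSym.eq_one_or_neg_one p (by push_cast; exact mul_ne_zero hx hy)

theorem pow_div_four_eq_jacobiSym_mul_of_dvd (hp : p % 4 = 1) (hxy : IsCoprime x y)
    (h : (p : ℤ) ∣ x ^ 2 - a * y ^ 2) :
    (a : ZMod p) ^ ((p - 1) / 4) = jacobiSym (x * y) p := by
  have hy := intCast_ne_zero_of_dvd_sq_sub_mul_sq hxy h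
  set k := (p - 1) / 4
  have hy4 : (y : ZMod p) ^ (4 * k) = 1 := by
    rw [← ZMod.pow_card_sub_one_eq_one hy]; congr 1; omega
  rw [← jacobiSym.legendreSym.to_jacobiSym, legendreSym.eq_pow, Int.cast_mul,
    show p / 2 = 2 * k by omega, pow_mul, mul_pow, sq_eq_mul_sq_of_dvd h]
  linear_combination (-(a : ZMod p) ^ k) * hy4

theorem quarticSym_eq_jacobiSym_mul_of_dvd_sq_sub (hp4 : p % 4 = 1) (hxy : IsCoprime x y)
    (ha : (a : ZMod p) ≠ 0) (h : (p : ℤ) ∣ x ^ 2 - a * y ^ 2) :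
    quarticSym a p = jacobiSym (x * y) p :=
  quarticSym_eq_of_pow_div_four_eq (by have := (Fact.out : p.Prime).two_le; omega)
    (jacobiSym_mul_eq_one_or_neg_one_of_dvd hxy ha h)
    (pow_div_four_eq_jacobiSym_mul_of_dvd hp4 hxy h)

theorem quarticSym_eq_neg_jacobiSym_mul_of_dvd_sq_add (hp8 : p % 8 = 5) (hxy : IsCoprime x y)
    (ha : (a : ZMod p) ≠ 0) (h : (p : ℤ) ∣ x ^ 2 + a * y ^ 2) :
    quarticSym a p = -jacobiSym (x * y) p := by
  have h' : (p : ℤ) ∣ x ^ 2 - (-a) * y ^ 2 := by rwa [neg_mul, sub_neg_eq_add]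
  have ha' : ((-a : ℤ) : ZMod p) ≠ 0 := by rwa [Int.cast_neg, neg_ne_zero]
  have hk : Odd ((p - 1) / 4) := Nat.odd_iff.mpr (by omega)
  have he : -jacobiSym (x * y) p = 1 ∨ -jacobiSym (x * y) p = -1 := by
    rcases jacobiSym_mul_eq_one_or_neg_one_of_dvd hxy ha' h' with h | h <;> simp [h]
  refine quarticSym_eq_of_pow_div_four_eq (by omega) he ?_
  rw [Int.cast_neg, ← pow_div_four_eq_jacobiSym_mul_of_dvd (by omega) hxy h', Int.cast_neg,
    hk.neg_pow, neg_neg]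

end ModPrime

theorem stmt15_general (t : ℕ) (ht : Even t)
    (p : Fin t → ℕ) (q : ℕ)
    (hp : ∀ i, (p i).Prime) (hq : q.Prime)
    (hpq : ∀ i, p i ≠ q)
    (hp5 : ∀ i, p i % 8 = 5)
    (S : Finset (Fin t))
    (x y z w : ℤ) (hy : y ≠ 0)
    (hgcd : Int.gcd x y = 1)
    (heq1 : x ^ 2 + (q : ℤ) * y ^ 2 = (∏ i ∈ Sᶜ, (p i : ℤ)) * z ^ 2)
    (heq2 : x ^ 2 - (q : ℤ) * y ^ 2 = (∏ i ∈ S, (p i : ℤ)) * w ^ 2) :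
    jacobiSym y (∏ i, p i) = 1 ∧
    (∏ i, quarticSym q (p i)) =
      (∏ i ∈ S, (-1 : ℤ) ^ ((p i - 1) / 4)) * jacobiSym x (∏ i, p i) := by
  have hxy : IsCoprime x y := Int.isCoprime_iff_gcd_eq_one.mpr hgcd
  have ht' : Even (Fintype.card (Fin t)) := by rwa [Fintype.card_fin]
  have hJy : jacobiSym y (∏ i, p i) = 1 := by
    have hP8 : (∏ i ∈ S, p i) * (∏ i ∈ Sᶜ, p i) % 8 = 1 := by
      rw [prod_mul_prod_compl]; exact prod_mod_eight_eq_one ht' fun i _ => hp5 i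
    rw [← prod_mul_prod_compl S]
    exact jacobiSym_eq_one_of_sq_add_mul_sq_of_sq_sub_mul_sq hP8 hy hxy
      (by push_cast; exact heq1) (by push_cast; exact heq2)
  have hq_ne (i : Fin t) : ((q : ℤ) : ZMod (p i)) ≠ 0 := by
    rw [Int.cast_natCast, Ne, ZMod.natCast_eq_zero_iff]
    exact fun h => hpq i ((Nat.prime_dvd_prime_iff_eq (hp i) hq).mp h)
  have hS (i : Fin t) (hi : i ∈ S) : quarticSym q (p i) = jacobiSym (x * y) (p i) :=
    have := Fact.mk (hp i)
    quarticSym_eq_jacobiSym_mul_of_dvd_sq_sub (by have := hp5 i; omega) hxy (hq_ne i)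
      (heq2 ▸ dvd_mul_of_dvd_left (dvd_prod_of_mem (fun i => (p i : ℤ)) hi) _)
  have hSc (i : Fin t) (hi : i ∈ Sᶜ) : quarticSym q (p i) = -jacobiSym (x * y) (p i) :=
    have := Fact.mk (hp i)
    quarticSym_eq_neg_jacobiSym_mul_of_dvd_sq_add (hp5 i) hxy (hq_ne i)
      (heq1 ▸ dvd_mul_of_dvd_left (dvd_prod_of_mem (fun i => (p i : ℤ)) hi) _)
  have hsign (i : Fin t) : (-1 : ℤ) ^ ((p i - 1) / 4) = -1 :=
    (Nat.odd_iff.mpr (by have := hp5 i; omega)).neg_one_pow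
  refine ⟨hJy, ?_⟩
  rw [prod_eq_neg_one_pow_card_mul_prod ht' S hS hSc,
    ← jacobiSym_prod_right _ _ fun i _ => (hp i).ne_zero, jacobiSym.mul_left, hJy, mul_one,
    prod_congr rfl fun i _ => hsign i, prod_const]

/-- Let `t ≥ 2` be even and `p_1, …, p_t, q` distinct primes with `p_i ≡ 5 (mod 8)`,
`q ≡ 3 (mod 8)` and `(q / p_i) = 1` for all `i`; set `P = p_1 ⋯ p_t` and let
`P = P_v · P_v'` be a factorization into coprime positive divisors, given by a set `S`
of indices (`P_v = ∏_{i ∈ S} p_i`, `P_v' = ∏_{i ∉ S} p_i`).  If there are nonzero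
integers `x, y, z, w` with `gcd(x, y) = 1` satisfying `x² + q y² = P_v' z²` and
`x² − q y² = P_v w²`, then the Jacobi symbol `(y / P) = 1` and
`(q / P)₄ = (-1 / P_v)₄ · (x / P)` where `(-1 / P_v)₄ = ∏_{i ∈ S} (-1)^((p_i - 1)/4)`. -/
theorem stmt15 (t : ℕ) (ht : Even t) (ht2 : 2 ≤ t)
    (p : Fin t → ℕ) (q : ℕ)
    (hp : ∀ i, (p i).Prime) (hq : q.Prime)
    (hinj : Function.Injective p) (hpq : ∀ i, p i ≠ q)
    (hp5 : ∀ i, p i % 8 = 5) (hq3 : q % 8 = 3)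
    (hleg : ∀ i, jacobiSym q (p i) = 1)
    (S : Finset (Fin t))
    (x y z w : ℤ) (hx : x ≠ 0) (hy : y ≠ 0) (hz : z ≠ 0) (hw : w ≠ 0)
    (hgcd : Int.gcd x y = 1)
    (heq1 : x ^ 2 + (q : ℤ) * y ^ 2 = (∏ i ∈ Sᶜ, (p i : ℤ)) * z ^ 2)
    (heq2 : x ^ 2 - (q : ℤ) * y ^ 2 = (∏ i ∈ S, (p i : ℤ)) * w ^ 2) :
    jacobiSym y (∏ i, p i) = 1 ∧
    (∏ i, quarticSym q (p i)) =
      (∏ i ∈ S, (-1 : ℤ) ^ ((p i - 1) / 4)) * jacobiSym x (∏ i, p i) :=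
  stmt15_general t ht p q hp hq hpq hp5 S x y z w hy hgcd heq1 heq2
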